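/- Let Y be a Young diagram of charge k and i ∈ I with f̃_i Y ≠ 0. Then f̃_i Y is a Young diagram of charge k with b_i(f̃_i Y) = b_i(Y) + 1 and b_j(f̃_i Y) = b_j(Y) for all j ≠ i, and cc_j(f̃_i Y) − cx_j(f̃_i Y) = (cc_j(Y) − cx_j(Y)) − a_{ji} for every j ∈ I. -/

import Mathlib

open scoped Classical

noncomputable section

/-- The base field `ℚ(q)`. -/
abbrev Kq : Type := RatFunc ℚ

/-- The indeterminate `q` of `ℚ(q)`. -/
def fq : Kq := RatFunc.X

/-- The generalized Cartan matrix of affine type `C_n^{(1)}` (meaningful for `i, j ≤ n`). -/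
def cartan (n i j : ℕ) : ℤ :=
  if i = j then 2
  else if i = 1 ∧ j = 0 then -2
  else if i = n - 1 ∧ j = n then -2
  else if i + 1 = j ∨ j + 1 = i then -1
  else 0

/-- The symmetrizing integers: `s 0 = s n = 2`, otherwise `1`. -/
def sg (n i : ℕ) : ℕ := if i = 0 ∨ i = n then 2 else 1

/-- `q_i = q ^ s_i`. -/
def qi (n i : ℕ) : Kq := fq ^ sg n i

/-- The colour of the site `(l, z)`: the unique `i ∈ {0,…,n}` with
`l + z ≡ i` or `-i (mod 2n)`. -/
def colour (n l : ℕ) (z : ℤ) : ℕ :=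
  let r := (((l : ℤ) + z) % (2 * (n : ℤ))).toNat
  if r ≤ n then r else 2 * n - r

/-- A Young diagram of charge `k`: a nondecreasing sequence of integers eventually
equal to `k`. -/
structure YD (n k : ℕ) where
  y : ℕ → ℤ
  mono : Monotone y
  eventually : ∃ N, ∀ l, N ≤ l → y l = (k : ℤ)

variable {n k : ℕ}

/-- `Y` has a concave corner at site `(l, z)`. -/
def ConcaveAt (Y : YD n k) (l : ℕ) (z : ℤ) : Prop :=
  (l = 0 ∧ z = Y.y 0) ∨ (∃ m, l = m + 1 ∧ Y.y m < Y.y (m + 1) ∧ z = Y.y (m + 1))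

/-- `Y` has a convex corner at site `(l, z)`. -/
def ConvexAt (Y : YD n k) (l : ℕ) (z : ℤ) : Prop :=
  ∃ m, l = m + 1 ∧ Y.y m < Y.y (m + 1) ∧ z = Y.y m

/-- The number of `i`-coloured concave corners of `Y`. -/
def cc (i : ℕ) (Y : YD n k) : ℕ :=
  {p : ℕ × ℤ | ConcaveAt Y p.1 p.2 ∧ colour n p.1 p.2 = i}.ncard

/-- The number of `i`-coloured convex corners of `Y`. -/
def cx (i : ℕ) (Y : YD n k) : ℕ :=
  {p : ℕ × ℤ | ConvexAt Y p.1 p.2 ∧ colour n p.1 p.2 = i}.ncard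

/-- The number of `j`-coloured boxes of `Y`. -/
def boxes (j : ℕ) (Y : YD n k) : ℕ :=
  {p : ℕ × ℤ | Y.y p.1 < p.2 ∧ p.2 ≤ (k : ℤ) ∧ colour n p.1 p.2 = j}.ncard

/-- Removing the convex corner of `Y` at site `(l, z)`. -/
def removeY (Y : YD n k) (l : ℕ) (z : ℤ) (h : ConvexAt Y l z) : YD n k where
  y := Function.update Y.y (l - 1) (Y.y (l - 1) + 1)
  mono := by
    obtain ⟨m, rfl, hlt, -⟩ := h
    simp only [Nat.add_sub_cancel]
    apply monotone_nat_of_le_succ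
    intro r
    rcases eq_or_ne r m with rfl | h1
    · rw [Function.update_self, Function.update_of_ne (by omega)]
      omega
    · rcases eq_or_ne (r + 1) m with h2 | h2
      · rw [Function.update_of_ne h1, h2, Function.update_self]
        have hm := Y.mono (Nat.le_add_right r 1)
        rw [h2] at hm
        omega
      · rw [Function.update_of_ne h1, Function.update_of_ne h2]
        exact Y.mono (Nat.le_add_right r 1)
  eventually := by
    obtain ⟨N, hN⟩ := Y.eventually
    exact ⟨N + l + 1, fun r hr => by
      rw [Function.update_of_ne (by omega)]
      exact hN r (by omega)⟩

/-- Adding a box at the concave corner of `Y` at site `(l, z)`. -/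
def addY (Y : YD n k) (l : ℕ) (z : ℤ) (h : ConcaveAt Y l z) : YD n k where
  y := Function.update Y.y l (Y.y l - 1)
  mono := by
    apply monotone_nat_of_le_succ
    intro r
    rcases eq_or_ne r l with rfl | h1
    · rw [Function.update_self, Function.update_of_ne (by omega)]
      have := Y.mono (Nat.le_add_right r 1)
      omega
    · rcases eq_or_ne (r + 1) l with h2 | h2
      · rw [Function.update_of_ne h1, h2, Function.update_self]
        rcases h with ⟨hl0, -⟩ | ⟨m, hm, hlt, -⟩
        · omega
        · have hrm : r = m := by omega
          subst hrm
          rw [← hm] at hlt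
          omega
      · rw [Function.update_of_ne h1, Function.update_of_ne h2]
        exact Y.mono (Nat.le_add_right r 1)
  eventually := by
    obtain ⟨N, hN⟩ := Y.eventually
    exact ⟨N + l + 1, fun r hr => by
      rw [Function.update_of_ne (by omega)]
      exact hN r (by omega)⟩

/-- The Fock space `F(Λ_k)`: the `ℚ(q)`-vector space with basis the Young diagrams of
charge `k`. -/
abbrev Fock (n k : ℕ) := YD n k →₀ Kq

/-- The basis vector of the Fock space corresponding to a Young diagram. -/
def fockB (Y : YD n k) : Fock n k := Finsupp.single Y 1

/-- The linear operator on the Fock space determined by its values on basis vectors. -/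
def lift (g : YD n k → Fock n k) : Fock n k →ₗ[Kq] Fock n k :=
  Finsupp.lsum Kq fun Y => LinearMap.toSpanSingleton Kq (Fock n k) (g Y)

/-- The single-site operator `E_{(l,z)}`. -/
def Esite (n k : ℕ) (l : ℕ) (z : ℤ) : Fock n k →ₗ[Kq] Fock n k :=
  lift fun Y => if h : ConvexAt Y l z then fockB (removeY Y l z h) else 0

/-- The single-site operator `F_{(l,z)}`. -/
def Fsite (n k : ℕ) (l : ℕ) (z : ℤ) : Fock n k →ₗ[Kq] Fock n k :=
  lift fun Y => if h : ConcaveAt Y l z then fockB (addY Y l z h) else 0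

/-- `a(i,l,z,Y)`: the number of `i`-coloured concave corners at sites greater than `(l,z)`
minus the number of `i`-coloured convex corners at sites greater than `(l,z)`. -/
def aExp (i l : ℕ) (z : ℤ) (Y : YD n k) : ℤ :=
  ({p : ℕ × ℤ | ConcaveAt Y p.1 p.2 ∧ colour n p.1 p.2 = i ∧
      (l : ℤ) + z < (p.1 : ℤ) + p.2}.ncard : ℤ)
  - ({p : ℕ × ℤ | ConvexAt Y p.1 p.2 ∧ colour n p.1 p.2 = i ∧
      (l : ℤ) + z < (p.1 : ℤ) + p.2}.ncard : ℤ)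

/-- `b(i,l,z,Y)`: the number of `i`-coloured convex corners at sites smaller than `(l,z)`
minus the number of `i`-coloured concave corners at sites smaller than `(l,z)`. -/
def bExp (i l : ℕ) (z : ℤ) (Y : YD n k) : ℤ :=
  ({p : ℕ × ℤ | ConvexAt Y p.1 p.2 ∧ colour n p.1 p.2 = i ∧
      (p.1 : ℤ) + p.2 < (l : ℤ) + z}.ncard : ℤ)
  - ({p : ℕ × ℤ | ConcaveAt Y p.1 p.2 ∧ colour n p.1 p.2 = i ∧
      (p.1 : ℤ) + p.2 < (l : ℤ) + z}.ncard : ℤ)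

/-- The Chevalley-type operator `E_i` on the Fock space: on a basis diagram `Y`,
`E_i Y = Σ_{(l,z) : i-coloured convex corner of Y} q_i^{a(i,l,z,Y)} • (Y with corner removed)`,
where the power of `q_i` records the product of the `T⁺` factors at larger `i`-coloured sites. -/
def Ei (n k i : ℕ) : Fock n k →ₗ[Kq] Fock n k :=
  lift fun Y => ∑ᶠ p : ℕ × ℤ,
    if h : ConvexAt Y p.1 p.2 ∧ colour n p.1 p.2 = i then
      (qi n i ^ aExp i p.1 p.2 Y) • fockB (removeY Y p.1 p.2 h.1)
    else 0

/-- The Chevalley-type operator `F_i` on the Fock space: on a basis diagram `Y`,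
`F_i Y = Σ_{(l,z) : i-coloured concave corner of Y} q_i^{b(i,l,z,Y)} • (Y with box added)`,
where the power of `q_i` records the product of the `T⁻` factors at smaller `i`-coloured sites. -/
def Fi (n k i : ℕ) : Fock n k →ₗ[Kq] Fock n k :=
  lift fun Y => ∑ᶠ p : ℕ × ℤ,
    if h : ConcaveAt Y p.1 p.2 ∧ colour n p.1 p.2 = i then
      (qi n i ^ bExp i p.1 p.2 Y) • fockB (addY Y p.1 p.2 h.1)
    else 0

/-- The operator `T_i⁺ = ∏_{(l,z) of colour i} T⁺_{(l,z)}`: it multiplies a basis diagram `Y`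
by `q_i^{cc_i(Y) - cx_i(Y)}`. -/
def Tplus (n k i : ℕ) : Fock n k →ₗ[Kq] Fock n k :=
  lift fun Y => (qi n i ^ ((cc i Y : ℤ) - (cx i Y : ℤ))) • fockB Y

/-- The operator `T_i⁻ = ∏_{(l,z) of colour i} T⁻_{(l,z)}`: it multiplies a basis diagram `Y`
by `q_i^{-(cc_i(Y) - cx_i(Y))}`. -/
def Tminus (n k i : ℕ) : Fock n k →ₗ[Kq] Fock n k :=
  lift fun Y => (qi n i ^ (-((cc i Y : ℤ) - (cx i Y : ℤ)))) • fockB Y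

/-- The operator `T_d`: it multiplies a basis diagram `Y` by `q^{-b_0(Y)}`. -/
def Td (n k : ℕ) : Fock n k →ₗ[Kq] Fock n k :=
  lift fun Y => (fq ^ (-(boxes 0 Y : ℤ))) • fockB Y

/-- The quantum integer `[m]_x = (x^m - x^{-m})/(x - x^{-1})`. -/
def qInt (x : Kq) (m : ℕ) : Kq := (x ^ m - x⁻¹ ^ m) / (x - x⁻¹)

/-- The quantum factorial `[m]_x!`. -/
def qFact (x : Kq) : ℕ → Kq
  | 0 => 1
  | m + 1 => qInt x (m + 1) * qFact x m

/-- The quantum binomial coefficient `[m choose r]_x`. -/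
def qBinom (x : Kq) (m r : ℕ) : Kq := qFact x m / (qFact x r * qFact x (m - r))

/-- The empty Young diagram `φ_k` of charge `k`. -/
def phiYD (n k : ℕ) : YD n k :=
  ⟨fun _ => (k : ℤ), monotone_const, ⟨0, fun _ _ => rfl⟩⟩

/-- `Y` has an (either concave or convex) corner at site `(l, z)`. -/
def CornerAt (Y : YD n k) (l : ℕ) (z : ℤ) : Prop := ConcaveAt Y l z ∨ ConvexAt Y l z

/-- `L` lists the sites of the `i`-coloured corners of `Y` in strictly decreasing order. -/
def Enumerates (Y : YD n k) (i : ℕ) (L : List (ℕ × ℤ)) : Prop :=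
  (∀ p : ℕ × ℤ, p ∈ L ↔ (CornerAt Y p.1 p.2 ∧ colour n p.1 p.2 = i)) ∧
  L.Chain' (fun p q => (q.1 : ℤ) + q.2 < (p.1 : ℤ) + p.2)

/-- The `i`-signature of `Y` along the list `L` of its `i`-coloured corner sites:
each site is tagged `true` if the corner there is convex (`σ = 1`) and `false`
if it is concave (`σ = 0`). -/
def sigL (Y : YD n k) (L : List (ℕ × ℤ)) : List ((ℕ × ℤ) × Bool) :=
  L.map fun p => (p, if ConvexAt Y p.1 p.2 then true else false)

/-- Reduction of a signature: repeatedly delete adjacent pairs `(0, 1)` (a concave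
entry immediately followed by a convex entry); the surviving entries are those
indexed by `J(σ)`. -/
def reduceSig : List ((ℕ × ℤ) × Bool) → List ((ℕ × ℤ) × Bool) :=
  List.foldr (fun x acc =>
    if x.2 = false ∧ acc.head?.map Prod.snd = some true then acc.tail else x :: acc) []

/-- The site at which `f̃_i` adds a box: the corner of the smallest index `r ∈ J(σ)`
with `σ_r = 0` (`none` if there is no such index, i.e. `f̃_i Y = 0`). -/
def ftildeSite (Y : YD n k) (i : ℕ) (L : List (ℕ × ℤ)) : Option (ℕ × ℤ) :=
  ((reduceSig (sigL Y L)).find? (fun x => !x.2)).map Prod.fst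

/-- The site at which `ẽ_i` removes a box: the corner of the largest index `r ∈ J(σ)`
with `σ_r = 1` (`none` if there is no such index, i.e. `ẽ_i Y = 0`). -/
def etildeSite (Y : YD n k) (i : ℕ) (L : List (ℕ × ℤ)) : Option (ℕ × ℤ) :=
  (((reduceSig (sigL Y L)).filter (fun x => x.2)).getLast?).map Prod.fst


/-!
The site chosen by `f̃_i` is an `i`-coloured concave corner `(l, y_l)`, because the reduction of
the signature only deletes entries. Adding a box there lowers `y_l` alone, so the box counts change
only by the new box `(l, y_l)`.

For the corners, `cc_j - cx_j` equals the telescoping sum over the columns `m` of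
`[colour (m, y_m) = j] - [colour (m + 1, y_m) = j]`: a column whose height does not jump
contributes nothing, and a jump contributes its concave and its convex corner. Lowering `y_l` by
one therefore changes `cc_j - cx_j` by `[c (d - 1) = j] + [c (d + 1) = j] - 2 [c d = j]`, where
`c d` is the colour of the diagonal `d = l + y_l`. The neighbouring diagonals of a diagonal of
colour `c` have colours `c - 1` and `c + 1`, folded to `1, 1` at `c = 0` and to `n - 1, n - 1` at
`c = n`, and this is exactly the column `-a_{j c}` of the Cartan matrix of type `C_n^{(1)}`.
-/

lemma colour_congr {l l' : ℕ} {z z' : ℤ} (h : (l : ℤ) + z = l' + z') :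
    colour n l z = colour n l' z' := by
  simp only [colour, h]

lemma colour_eq_of_eq_add_mul (hn : 0 < n) {l : ℕ} {z : ℤ} {c : ℕ} (hc : c ≤ n) (q : ℤ)
    (h : (l : ℤ) + z = c + 2 * n * q ∨ (l : ℤ) + z = -c + 2 * n * q) : colour n l z = c := by
  have hres : ((l : ℤ) + z) % (2 * n) = c ∨
      (0 < c ∧ ((l : ℤ) + z) % (2 * n) = 2 * n - c) := by
    rcases h with h | h
    · left
      rw [h, Int.add_mul_emod_self_left, Int.emod_eq_of_lt (by omega) (by omega)]
    · rcases Nat.eq_zero_or_pos c with rfl | hc0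
      · left
        rw [h, Int.add_mul_emod_self_left]
        simp
      · right
        refine ⟨hc0, ?_⟩
        rw [show (l : ℤ) + z = (2 * n - c) + 2 * n * (q - 1) by rw [h]; ring,
          Int.add_mul_emod_self_left, Int.emod_eq_of_lt (by omega) (by omega)]
  unfold colour
  rcases hres with hres | ⟨hc0, hres⟩ <;> simp only [hres] <;> split_ifs <;> omega

/-- The possible colours `a`, `b` of the diagonals `d - 1`, `d + 1` next to a diagonal `d` of
colour `c`. -/
def NeighbourColours (n c a b : ℕ) : Prop :=
  (c = 0 ∧ a = 1 ∧ b = 1) ∨ (c = n ∧ a = n - 1 ∧ b = n - 1) ∨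
    (0 < c ∧ c < n ∧ (a = c - 1 ∧ b = c + 1 ∨ a = c + 1 ∧ b = c - 1))

lemma neighbourColours_colour (hn : 0 < n) (l : ℕ) (z : ℤ) :
    NeighbourColours n (colour n l z) (colour n l (z - 1)) (colour n l (z + 1)) := by
  obtain ⟨r, hr⟩ :=
    Int.eq_ofNat_of_zero_le (Int.emod_nonneg ((l : ℤ) + z) (by omega : (2 * n : ℤ) ≠ 0))
  have hr2n : (r : ℤ) < 2 * n := hr ▸ Int.emod_lt_of_pos _ (by omega)
  set q := ((l : ℤ) + z) / (2 * n)
  have hd : (l : ℤ) + z = r + 2 * n * q := by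
    rw [← hr]; exact (Int.emod_add_mul_ediv _ _).symm
  -- `omega` treats `2 * n * q` and `2 * n * (q + 1)` as unrelated atoms.
  have hq : 2 * (n : ℤ) * (q + 1) = 2 * n * q + 2 * n := by ring
  unfold NeighbourColours
  rcases (by omega : r = 0 ∨ (0 < r ∧ r < n) ∨ r = n ∨ (n < r)) with h | h | h | h
  · left
    exact ⟨colour_eq_of_eq_add_mul hn (by omega) q (by omega),
      colour_eq_of_eq_add_mul hn (by omega) q (by omega),
      colour_eq_of_eq_add_mul hn (by omega) q (by omega)⟩
  · right; right
    rw [colour_eq_of_eq_add_mul hn (c := r) (by omega) q (by omega),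
      colour_eq_of_eq_add_mul hn (c := r - 1) (by omega) q (by omega),
      colour_eq_of_eq_add_mul hn (c := r + 1) (by omega) q (by omega)]
    omega
  · right; left
    rw [colour_eq_of_eq_add_mul hn (c := n) (by omega) q (by omega),
      colour_eq_of_eq_add_mul hn (c := n - 1) (by omega) q (by omega),
      colour_eq_of_eq_add_mul hn (c := n - 1) (by omega) (q + 1) (by omega)]
    omega
  · right; right
    rw [colour_eq_of_eq_add_mul hn (c := 2 * n - r) (by omega) (q + 1) (by omega),
      colour_eq_of_eq_add_mul hn (c := 2 * n - r + 1) (by omega) (q + 1) (by omega),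
      colour_eq_of_eq_add_mul hn (c := 2 * n - r - 1) (by omega) (q + 1) (by omega)]
    omega

lemma NeighbourColours.indicator_eq_neg_cartan {c a b j : ℕ} (h : NeighbourColours n c a b)
    (hn : 0 < n) (hj : j ≤ n) :
    ((if a = j then 1 else 0) + (if b = j then 1 else 0) - 2 * (if c = j then 1 else 0) : ℤ)
      = -cartan n j c := by
  unfold NeighbourColours at h
  unfold cartan
  split_ifs <;> omega

namespace YD

lemma le_charge (Y : YD n k) (l : ℕ) : Y.y l ≤ k := by
  obtain ⟨N, hN⟩ := Y.eventually
  calc Y.y l ≤ Y.y (max l N) := Y.mono (le_max_left _ _)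
    _ = k := hN _ (le_max_right _ _)

end YD

@[simp] lemma concaveAt_zero_iff (Y : YD n k) (z : ℤ) : ConcaveAt Y 0 z ↔ z = Y.y 0 := by
  simp [ConcaveAt]

@[simp] lemma concaveAt_succ_iff (Y : YD n k) (m : ℕ) (z : ℤ) :
    ConcaveAt Y (m + 1) z ↔ Y.y m < Y.y (m + 1) ∧ z = Y.y (m + 1) := by
  simp [ConcaveAt]

@[simp] lemma not_convexAt_zero (Y : YD n k) (z : ℤ) : ¬ ConvexAt Y 0 z := by
  simp [ConvexAt]

@[simp] lemma convexAt_succ_iff (Y : YD n k) (m : ℕ) (z : ℤ) :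
    ConvexAt Y (m + 1) z ↔ Y.y m < Y.y (m + 1) ∧ z = Y.y m := by
  simp [ConvexAt]

lemma ConcaveAt.eq {Y : YD n k} {l : ℕ} {z : ℤ} (h : ConcaveAt Y l z) : z = Y.y l := by
  cases l <;> simp_all

lemma cc_eq_sum {Y : YD n k} {M : ℕ} (hM : ∀ m, M ≤ m → Y.y m = k) (j : ℕ) :
    (cc j Y : ℤ) = ∑ m ∈ Finset.range (M + 1),
      if ConcaveAt Y m (Y.y m) ∧ colour n m (Y.y m) = j then 1 else 0 := by
  have hset : {p : ℕ × ℤ | ConcaveAt Y p.1 p.2 ∧ colour n p.1 p.2 = j}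
      = ((Finset.range (M + 1)).filter fun m =>
          ConcaveAt Y m (Y.y m) ∧ colour n m (Y.y m) = j).image fun m => (m, Y.y m) := by
    ext ⟨l, z⟩
    simp only [Set.mem_ofPred_eq, Finset.coe_image, Finset.coe_filter, Finset.mem_range,
      Set.mem_image, Prod.mk.injEq]
    constructor
    · rintro ⟨hl, hcol⟩
      obtain rfl := hl.eq
      refine ⟨l, ⟨?_, hl, hcol⟩, rfl, rfl⟩
      cases l with
      | zero => omega
      | succ m =>
        by_contra hlM
        have := (concaveAt_succ_iff Y m _).1 hl
        rw [hM m (by omega), hM (m + 1) (by omega)] at this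
        exact lt_irrefl _ this.1
    · rintro ⟨m, ⟨-, hm, hcol⟩, rfl, rfl⟩
      exact ⟨hm, hcol⟩
  rw [cc, hset, Set.ncard_coe_finset,
    Finset.card_image_of_injective _ (fun a b h => congrArg Prod.fst h), Finset.natCast_card_filter]

lemma cx_eq_sum {Y : YD n k} {M : ℕ} (hM : ∀ m, M ≤ m → Y.y m = k) (j : ℕ) :
    (cx j Y : ℤ) = ∑ m ∈ Finset.range M,
      if Y.y m < Y.y (m + 1) ∧ colour n (m + 1) (Y.y m) = j then 1 else 0 := by
  have hset : {p : ℕ × ℤ | ConvexAt Y p.1 p.2 ∧ colour n p.1 p.2 = j}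
      = ((Finset.range M).filter fun m =>
          Y.y m < Y.y (m + 1) ∧ colour n (m + 1) (Y.y m) = j).image fun m => (m + 1, Y.y m) := by
    ext ⟨l, z⟩
    simp only [Set.mem_ofPred_eq, Finset.coe_image, Finset.coe_filter, Finset.mem_range,
      Set.mem_image, Prod.mk.injEq]
    constructor
    · rintro ⟨hl, hcol⟩
      cases l with
      | zero => exact absurd hl (not_convexAt_zero Y z)
      | succ m =>
        obtain ⟨hlt, rfl⟩ := (convexAt_succ_iff Y m _).1 hl
        refine ⟨m, ⟨?_, hlt, hcol⟩, rfl, rfl⟩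
        by_contra hmM
        rw [hM m (by omega), hM (m + 1) (by omega)] at hlt
        exact lt_irrefl _ hlt
    · rintro ⟨m, ⟨-, hlt, hcol⟩, rfl, rfl⟩
      exact ⟨(convexAt_succ_iff Y m _).2 ⟨hlt, rfl⟩, hcol⟩
  rw [cx, hset, Set.ncard_coe_finset,
    Finset.card_image_of_injective _ (fun a b h => by simpa using congrArg Prod.fst h),
    Finset.natCast_card_filter]

lemma Finset.sum_apply_update_eq {ι α β : Type*} [DecidableEq ι] [AddCommGroup β]
    {s : Finset ι} {l : ι} (hl : l ∈ s) (F : ι → α → β) (y : ι → α) (v : α) :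
    ∑ m ∈ s, F m (Function.update y l v m) = ∑ m ∈ s, F m (y m) + (F l v - F l (y l)) := by
  rw [← Finset.add_sum_erase s _ hl, ← Finset.add_sum_erase s _ hl, Function.update_self,
    Finset.sum_congr rfl fun m hm => by rw [Function.update_of_ne (Finset.ne_of_mem_erase hm)]]
  abel

def cornerBalance (n j : ℕ) (y : ℕ → ℤ) (M : ℕ) : ℤ :=
  ∑ m ∈ Finset.range (M + 1), (if colour n m (y m) = j then 1 else 0)
    - ∑ m ∈ Finset.range M, (if colour n (m + 1) (y m) = j then 1 else 0)

lemma cc_sub_cx_eq_cornerBalance {Y : YD n k} {M : ℕ} (hM : ∀ m, M ≤ m → Y.y m = k)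
    (j : ℕ) : (cc j Y : ℤ) - cx j Y = cornerBalance n j Y.y M := by
  have hcolumn : ∀ m,
      ((if ConcaveAt Y (m + 1) (Y.y (m + 1)) ∧ colour n (m + 1) (Y.y (m + 1)) = j then 1 else 0)
      - (if Y.y m < Y.y (m + 1) ∧ colour n (m + 1) (Y.y m) = j then 1 else 0) : ℤ)
      = (if colour n (m + 1) (Y.y (m + 1)) = j then 1 else 0)
        - (if colour n (m + 1) (Y.y m) = j then 1 else 0) := by
    intro m
    by_cases h : Y.y m < Y.y (m + 1)
    · simp only [concaveAt_succ_iff, h, true_and]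
    · have heq : Y.y (m + 1) = Y.y m := le_antisymm (not_lt.1 h) (Y.mono m.le_succ)
      simp [heq]
  have hsum := Finset.sum_congr rfl fun m (_ : m ∈ Finset.range M) => hcolumn m
  simp only [Finset.sum_sub_distrib] at hsum
  rw [cc_eq_sum hM, cx_eq_sum hM, cornerBalance, Finset.sum_range_succ', Finset.sum_range_succ']
  simp only [concaveAt_zero_iff, true_and]
  linarith

lemma cornerBalance_update (n j : ℕ) (y : ℕ → ℤ) {l M : ℕ} (hl : l < M) :
    cornerBalance n j (Function.update y l (y l - 1)) M = cornerBalance n j y M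
      + ((if colour n l (y l - 1) = j then 1 else 0) + (if colour n l (y l + 1) = j then 1 else 0)
        - 2 * (if colour n l (y l) = j then 1 else 0)) := by
  have h₁ : colour n (l + 1) (y l - 1) = colour n l (y l) := colour_congr (by push_cast; ring)
  have h₂ : colour n (l + 1) (y l) = colour n l (y l + 1) := colour_congr (by push_cast; ring)
  unfold cornerBalance
  rw [Finset.sum_apply_update_eq (Finset.mem_range.2 (by omega))
      (fun m z => if colour n m z = j then (1 : ℤ) else 0),
    Finset.sum_apply_update_eq (Finset.mem_range.2 hl)
      (fun m z => if colour n (m + 1) z = j then (1 : ℤ) else 0)]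
  simp only [h₁, h₂]
  ring

lemma boxes_finite (Y : YD n k) (j : ℕ) :
    {p : ℕ × ℤ | Y.y p.1 < p.2 ∧ p.2 ≤ k ∧ colour n p.1 p.2 = j}.Finite := by
  obtain ⟨N, hN⟩ := Y.eventually
  refine ((Set.finite_Iio N).prod (Set.finite_Icc (Y.y 0) k)).subset ?_
  rintro ⟨m, z⟩ ⟨hlt, hle, -⟩
  refine ⟨?_, (Y.mono m.zero_le).trans hlt.le, hle⟩
  by_contra hm
  rw [hN m (not_lt.1 hm)] at hlt
  exact absurd hle (not_le.2 hlt)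

lemma boxes_addY (Y : YD n k) {l : ℕ} (h : ConcaveAt Y l (Y.y l)) (j : ℕ) :
    boxes j (addY Y l (Y.y l) h) = boxes j Y + if colour n l (Y.y l) = j then 1 else 0 := by
  have hmem : ∀ p : ℕ × ℤ, ((addY Y l (Y.y l) h).y p.1 < p.2 ∧ p.2 ≤ k)
      ↔ (p = (l, Y.y l) ∨ (Y.y p.1 < p.2 ∧ p.2 ≤ k)) := by
    rintro ⟨m, z⟩
    have := Y.le_charge l
    rcases eq_or_ne m l with rfl | hm
    · simp only [addY, Function.update_self, Prod.mk.injEq, true_and]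
      omega
    · simp [addY, hm]
  unfold boxes
  split_ifs with hcol
  · rw [← Set.ncard_insert_of_notMem (a := (l, Y.y l)) (by simp) (boxes_finite Y j)]
    congr 1
    ext p
    simp only [Set.mem_ofPred_eq, Set.mem_insert_iff, ← and_assoc, hmem]
    constructor
    · rintro ⟨rfl | hb, hc⟩
      exacts [Or.inl rfl, Or.inr ⟨hb, hc⟩]
    · rintro (rfl | ⟨hb, hc⟩)
      exacts [⟨Or.inl rfl, hcol⟩, ⟨Or.inr hb, hc⟩]
  · congr 1
    ext p
    simp only [Set.mem_ofPred_eq, ← and_assoc, hmem]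
    constructor
    · rintro ⟨rfl | hb, hc⟩
      exacts [absurd hc hcol, ⟨hb, hc⟩]
    · rintro ⟨hb, hc⟩
      exact ⟨Or.inr hb, hc⟩

lemma reduceSig_sublist (s : List ((ℕ × ℤ) × Bool)) : (reduceSig s).Sublist s := by
  induction s with
  | nil => exact .refl _
  | cons a s ih =>
    change (if a.2 = false ∧ (reduceSig s).head?.map Prod.snd = some true
        then (reduceSig s).tail else a :: reduceSig s).Sublist (a :: s)
    split_ifs
    · exact ((List.tail_sublist _).trans ih).cons a
    · exact ih.cons_cons a

lemma concaveAt_of_ftildeSite {Y : YD n k} {i : ℕ} {L : List (ℕ × ℤ)} (hL : Enumerates Y i L)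
    {p : ℕ × ℤ} (hp : ftildeSite Y i L = some p) :
    ConcaveAt Y p.1 p.2 ∧ colour n p.1 p.2 = i := by
  obtain ⟨x, hx, rfl⟩ := Option.map_eq_some_iff.1 hp
  have hconcave : x.2 = false := by simpa using List.find?_some hx
  obtain ⟨q, hq, rfl⟩ :=
    List.mem_map.1 ((reduceSig_sublist _).subset (List.mem_of_find?_eq_some hx))
  obtain ⟨hcorner, hcol⟩ := (hL.1 q).1 hq
  refine ⟨hcorner.resolve_right fun hconvex => ?_, hcol⟩
  simp [hconvex] at hconcave

theorem ftilde_weight_general (n : ℕ) (hn : 2 ≤ n) (k : ℕ) (Y : YD n k)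
    (i : ℕ) (L : List (ℕ × ℤ)) (hL : Enumerates Y i L)
    (p : ℕ × ℤ) (hp : ftildeSite Y i L = some p) :
    ∃ Y' : YD n k, Y'.y = Function.update Y.y p.1 (Y.y p.1 - 1) ∧
      boxes i Y' = boxes i Y + 1 ∧
      (∀ j ≤ n, j ≠ i → boxes j Y' = boxes j Y) ∧
      (∀ j ≤ n, (cc j Y' : ℤ) - (cx j Y' : ℤ)
        = ((cc j Y : ℤ) - (cx j Y : ℤ)) - cartan n j i) := by
  obtain ⟨hconcave, hcol⟩ := concaveAt_of_ftildeSite hL hp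
  obtain ⟨l, z⟩ := p
  obtain rfl : z = Y.y l := hconcave.eq
  obtain ⟨N, hN⟩ := Y.eventually
  have hM : ∀ m, N + l + 1 ≤ m → Y.y m = k := fun m hm => hN m (by omega)
  have hM' : ∀ m, N + l + 1 ≤ m → (addY Y l (Y.y l) hconcave).y m = k := fun m hm => by
    simp [addY, Function.update_of_ne (by omega : m ≠ l), hM m hm]
  refine ⟨addY Y l (Y.y l) hconcave, rfl, by simp [boxes_addY, hcol],
    fun j _ hji => by simp [boxes_addY, hcol, Ne.symm hji], fun j hj => ?_⟩
  rw [cc_sub_cx_eq_cornerBalance hM', cc_sub_cx_eq_cornerBalance hM]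
  change cornerBalance n j (Function.update Y.y l (Y.y l - 1)) _ = _
  rw [cornerBalance_update n j Y.y (by omega),
    (neighbourColours_colour (by omega) l (Y.y l)).indicator_eq_neg_cartan (by omega) hj, hcol]
  ring

/-- Let `Y` be a Young diagram of charge `k` and `i ∈ I` with `f̃_i Y ≠ 0`
(i.e. the signature rule selects a site `p`). Then `f̃_i Y` is a Young diagram `Y'` of
charge `k` (obtained from `Y` by adding a box at `p`) with `b_i(Y') = b_i(Y) + 1`,
`b_j(Y') = b_j(Y)` for `j ≠ i`, and
`cc_j(Y') - cx_j(Y') = (cc_j(Y) - cx_j(Y)) - a_{ji}` for every `j ∈ I`. -/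
theorem ftilde_weight (n : ℕ) (hn : 2 ≤ n) (k : ℕ) (hk : k ≤ n) (Y : YD n k)
    (i : ℕ) (hi : i ≤ n) (L : List (ℕ × ℤ)) (hL : Enumerates Y i L)
    (p : ℕ × ℤ) (hp : ftildeSite Y i L = some p) :
    ∃ Y' : YD n k, Y'.y = Function.update Y.y p.1 (Y.y p.1 - 1) ∧
      boxes i Y' = boxes i Y + 1 ∧
      (∀ j ≤ n, j ≠ i → boxes j Y' = boxes j Y) ∧
      (∀ j ≤ n, (cc j Y' : ℤ) - (cx j Y' : ℤ)
        = ((cc j Y : ℤ) - (cx j Y : ℤ)) - cartan n j i) :=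
  ftilde_weight_general n hn k Y i L hL p hp

end
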